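/- arXiv:2311.03204 — 2 statements merged into one kernel-verified Lean document; each statement's English description precedes it below -/
import Mathlib

section
/- For every integer N ≥ 1, ∫₀^∞ r·arctan²(r)/(1+r²)^{N+1} dr = (1/N) ∫₀^∞ arctan(r)/(1+r²)^{N+1} dr, and as N → ∞ this quantity is asymptotic to 1/(2N²). -/
/-!
Since `(1 + r²)^(-N)` has derivative `-2N r (1 + r²)^(-N-1)`, integrating by parts against
`arctan² r` (the boundary terms vanish) gives the identity. For the asymptotics, the
elementary bounds `r / (1 + r²) ≤ arctan r ≤ r` on `[0, ∞)` squeeze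
`∫ arctan r / (1 + r²)^(N+1)` between `∫ r / (1 + r²)^(N+2) = 1 / (2(N+1))` and
`∫ r / (1 + r²)^(N+1) = 1 / (2N)`.
-/

open MeasureTheory Real Filter Asymptotics Set Topology

namespace Real

lemma arctan_le_self {x : ℝ} (hx : 0 ≤ x) : arctan x ≤ x := by
  simpa only [tan_arctan] using le_tan (arctan_nonneg.mpr hx) (arctan_lt_pi_div_two x)

lemma div_one_add_sq_le_arctan {x : ℝ} (hx : 0 ≤ x) : x / (1 + x ^ 2) ≤ arctan x := by
  have hsq : √(1 + x ^ 2) ^ 2 = 1 + x ^ 2 := sq_sqrt (by positivity)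
  have h : x / (1 + x ^ 2) = sin (2 * arctan x) / 2 := by
    rw [sin_two_mul, sin_arctan, cos_arctan]
    field_simp
    rw [hsq]
  rw [h, div_le_iff₀ two_pos, mul_comm]
  exact sin_le (by positivity)

end Real

lemma tendsto_one_add_sq_pow_atTop {n : ℕ} (hn : n ≠ 0) :
    Tendsto (fun r : ℝ => (1 + r ^ 2) ^ n) atTop atTop :=
  (tendsto_pow_atTop hn).comp (tendsto_atTop_add_const_left _ 1 (tendsto_pow_atTop two_ne_zero))

lemma hasDerivAt_inv_one_add_sq_pow (n : ℕ) (r : ℝ) :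
    HasDerivAt (fun r : ℝ => ((1 + r ^ 2) ^ n)⁻¹)
      (-(2 * n * r / (1 + r ^ 2) ^ (n + 1))) r := by
  have h := (((hasDerivAt_pow 2 r).const_add 1).pow n).inv
    (pow_ne_zero n (by positivity : (1 + r ^ 2 : ℝ) ≠ 0))
  refine h.congr_deriv ?_
  rcases n with _ | n
  · simp
  · simp only [Pi.pow_apply, Nat.add_sub_cancel]
    field_simp
    push_cast
    ring

section

variable {n : ℕ}

lemma hasDerivAt_neg_inv_one_add_sq_pow_div (hn : n ≠ 0) (r : ℝ) :
    HasDerivAt (fun r : ℝ => -((1 + r ^ 2) ^ n)⁻¹ / (2 * (n : ℝ)))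
      (r / (1 + r ^ 2) ^ (n + 1)) r := by
  refine ((hasDerivAt_inv_one_add_sq_pow n r).neg.div_const _).congr_deriv ?_
  field_simp

lemma tendsto_neg_inv_one_add_sq_pow_div (hn : n ≠ 0) :
    Tendsto (fun r : ℝ => -((1 + r ^ 2) ^ n)⁻¹ / (2 * (n : ℝ))) atTop (𝓝 0) := by
  simpa using ((tendsto_one_add_sq_pow_atTop hn).inv_tendsto_atTop.neg.div_const (2 * (n : ℝ)))

lemma integrableOn_Ioi_div_one_add_sq_pow (hn : n ≠ 0) :
    IntegrableOn (fun r : ℝ => r / (1 + r ^ 2) ^ (n + 1)) (Ioi 0) :=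
  integrableOn_Ioi_deriv_of_nonneg' (fun r _ => hasDerivAt_neg_inv_one_add_sq_pow_div hn r)
    (fun r (hr : 0 < r) => by positivity) (tendsto_neg_inv_one_add_sq_pow_div hn)

lemma integral_Ioi_div_one_add_sq_pow (hn : n ≠ 0) :
    ∫ r in Ioi (0 : ℝ), r / (1 + r ^ 2) ^ (n + 1) = 1 / (2 * (n : ℝ)) := by
  rw [integral_Ioi_of_hasDerivAt_of_tendsto'
    (fun r _ => hasDerivAt_neg_inv_one_add_sq_pow_div hn r)
    (integrableOn_Ioi_div_one_add_sq_pow hn) (tendsto_neg_inv_one_add_sq_pow_div hn)]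
  simp [neg_div]

lemma integrableOn_Ioi_arctan_div_one_add_sq_pow (hn : n ≠ 0) :
    IntegrableOn (fun r : ℝ => arctan r / (1 + r ^ 2) ^ (n + 1)) (Ioi 0) := by
  refine (integrableOn_Ioi_div_one_add_sq_pow hn).mono'
    (by fun_prop : Measurable _).aestronglyMeasurable
    (ae_restrict_of_forall_mem measurableSet_Ioi fun r (hr : 0 < r) => ?_)
  rw [norm_of_nonneg (by positivity)]
  gcongr
  exact arctan_le_self hr.le

lemma integrableOn_Ioi_mul_arctan_sq_div_one_add_sq_pow (hn : n ≠ 0) :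
    IntegrableOn (fun r : ℝ => r * arctan r ^ 2 / (1 + r ^ 2) ^ (n + 1)) (Ioi 0) := by
  refine ((integrableOn_Ioi_div_one_add_sq_pow hn).const_mul ((π / 2) ^ 2)).mono'
    (by fun_prop : Measurable _).aestronglyMeasurable
    (ae_restrict_of_forall_mem measurableSet_Ioi fun r (hr : 0 < r) => ?_)
  have h0 : 0 ≤ arctan r := arctan_nonneg.mpr hr.le
  rw [norm_of_nonneg (by positivity), mul_div_assoc', mul_comm _ r]
  gcongr
  exact (arctan_lt_pi_div_two r).le

lemma hasDerivAt_arctan_sq_mul_inv_one_add_sq_pow (hn : n ≠ 0) (r : ℝ) :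
    HasDerivAt (fun r : ℝ => -(arctan r ^ 2 * ((1 + r ^ 2) ^ n)⁻¹) / (2 * (n : ℝ)))
      (r * arctan r ^ 2 / (1 + r ^ 2) ^ (n + 1) -
        1 / (n : ℝ) * (arctan r / (1 + r ^ 2) ^ (n + 1))) r := by
  have h := (((hasDerivAt_arctan r).pow 2).mul (hasDerivAt_inv_one_add_sq_pow n r)).neg.div_const
    (2 * (n : ℝ))
  refine h.congr_deriv ?_
  simp only [Pi.pow_apply]
  field_simp
  ring

lemma integral_Ioi_mul_arctan_sq_div_one_add_sq_pow (hn : n ≠ 0) :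
    ∫ r in Ioi (0 : ℝ), r * arctan r ^ 2 / (1 + r ^ 2) ^ (n + 1) =
      1 / (n : ℝ) * ∫ r in Ioi (0 : ℝ), arctan r / (1 + r ^ 2) ^ (n + 1) := by
  have hlim : Tendsto (fun r : ℝ => -(arctan r ^ 2 * ((1 + r ^ 2) ^ n)⁻¹) / (2 * (n : ℝ)))
      atTop (𝓝 0) := by
    simpa using (((tendsto_arctan_atTop.mono_right nhdsWithin_le_nhds).pow 2).mul
      (tendsto_one_add_sq_pow_atTop hn).inv_tendsto_atTop).neg.div_const (2 * (n : ℝ))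
  have hint1 := integrableOn_Ioi_mul_arctan_sq_div_one_add_sq_pow hn
  have hint2 := (integrableOn_Ioi_arctan_div_one_add_sq_pow hn).const_mul (1 / (n : ℝ))
  have hftc := integral_Ioi_of_hasDerivAt_of_tendsto'
    (fun r _ => hasDerivAt_arctan_sq_mul_inv_one_add_sq_pow hn r) (hint1.sub hint2) hlim
  rw [integral_sub hint1 hint2, integral_const_mul] at hftc
  simpa [sub_eq_zero] using hftc

lemma integral_Ioi_arctan_div_one_add_sq_pow_le (hn : n ≠ 0) :
    ∫ r in Ioi (0 : ℝ), arctan r / (1 + r ^ 2) ^ (n + 1) ≤ 1 / (2 * (n : ℝ)) := by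
  rw [← integral_Ioi_div_one_add_sq_pow hn]
  refine setIntegral_mono_on (integrableOn_Ioi_arctan_div_one_add_sq_pow hn)
    (integrableOn_Ioi_div_one_add_sq_pow hn) measurableSet_Ioi fun r (hr : 0 < r) => ?_
  gcongr
  exact arctan_le_self hr.le

lemma le_integral_Ioi_arctan_div_one_add_sq_pow (hn : n ≠ 0) :
    1 / (2 * ((n : ℝ) + 1)) ≤ ∫ r in Ioi (0 : ℝ), arctan r / (1 + r ^ 2) ^ (n + 1) := by
  have h := integral_Ioi_div_one_add_sq_pow n.succ_ne_zero
  push_cast at h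
  rw [← h]
  refine setIntegral_mono_on (integrableOn_Ioi_div_one_add_sq_pow n.succ_ne_zero)
    (integrableOn_Ioi_arctan_div_one_add_sq_pow hn) measurableSet_Ioi fun r (hr : 0 < r) => ?_
  rw [pow_succ', ← div_div]
  gcongr
  exact div_one_add_sq_le_arctan hr.le

end

lemma isEquivalent_integral_Ioi_arctan_div_one_add_sq_pow :
    (fun N : ℕ => ∫ r in Ioi (0 : ℝ), arctan r / (1 + r ^ 2) ^ (N + 1))
      ~[atTop] fun N : ℕ => 1 / (2 * (N : ℝ)) := by
  rw [isEquivalent_iff_tendsto_one ((eventually_ne_atTop 0).mono fun N hN => by positivity)]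
  refine tendsto_of_tendsto_of_tendsto_of_le_of_le' (tendsto_natCast_div_add_atTop (1 : ℝ))
    tendsto_const_nhds ?_ ?_
  · filter_upwards [eventually_ne_atTop 0] with N hN
    rw [Pi.div_apply, le_div_iff₀ (by positivity)]
    calc (N : ℝ) / (N + 1) * (1 / (2 * N)) = 1 / (2 * (N + 1)) := by field_simp
      _ ≤ _ := le_integral_Ioi_arctan_div_one_add_sq_pow hN
  · filter_upwards [eventually_ne_atTop 0] with N hN
    rw [Pi.div_apply, div_le_one (by positivity)]
    exact integral_Ioi_arctan_div_one_add_sq_pow_le hN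

/-- For every integer `N ≥ 1`,
`∫₀^∞ r arctan²(r)/(1+r²)^{N+1} dr = (1/N) ∫₀^∞ arctan(r)/(1+r²)^{N+1} dr`,
and as `N → ∞` this quantity is asymptotic to `1/(2N²)`. -/
theorem integral_r_arctan_sq_pow :
    (∀ N : ℕ, 1 ≤ N →
      (∫ r in Set.Ioi (0 : ℝ), r * Real.arctan r ^ 2 / (1 + r ^ 2) ^ (N + 1)) =
        (1 / (N : ℝ)) * ∫ r in Set.Ioi (0 : ℝ), Real.arctan r / (1 + r ^ 2) ^ (N + 1)) ∧
    (fun N : ℕ => ∫ r in Set.Ioi (0 : ℝ), r * Real.arctan r ^ 2 / (1 + r ^ 2) ^ (N + 1))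
      ~[atTop] (fun N : ℕ => 1 / (2 * (N : ℝ) ^ 2)) := by
  refine ⟨fun N hN =>
    integral_Ioi_mul_arctan_sq_div_one_add_sq_pow (Nat.one_le_iff_ne_zero.mp hN), ?_⟩
  have h := (IsEquivalent.refl (u := fun N : ℕ => 1 / (N : ℝ))).mul
    isEquivalent_integral_Ioi_arctan_div_one_add_sq_pow
  refine (h.congr_left ?_).congr_right (Eventually.of_forall fun N => ?_)
  · filter_upwards [eventually_ne_atTop 0] with N hN
    exact (integral_Ioi_mul_arctan_sq_div_one_add_sq_pow hN).symm
  · simp only [Pi.mul_apply]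
    ring
end

section
/- Let K_N(x,y) be the spherical ensemble kernel on S², with |K_N(x,y)|² = N²(1 − |x−y|²/4)^{N−1} (Euclidean distance in ℝ³). Define C_N^1 = ∫_{S²} |K_N(x,y)|² d(x,y) dσ(x) where d is geodesic distance and σ normalized surface measure. Then lim_{N→∞} C_N^1/√N = √π. -/
/-!
The substitution `r = t / √N` turns `C_N^1 / √N` into `2 ∫₀^∞ N f_N(t / √N) dt`, where `f_N` is the
integrand. The new integrand `2t · √N arctan(t / √N) / (1 + t²/N)^(N+1)` tends to
`2t² e^{-t²}` and, by the second-order Bernoulli inequality for the denominator, is dominated by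
`8 / (1 + t²)`. Dominated convergence and `∫₀^∞ t² e^{-t²} dt = √π / 4` give the limit.
-/

open MeasureTheory Real Filter Set Topology

lemma Real.arctan_le_self_s9 {x : ℝ} (hx : 0 ≤ x) : arctan x ≤ x := by
  simpa using le_tan (arctan_nonneg.2 hx) (arctan_lt_pi_div_two x)

lemma one_add_mul_add_choose_two_mul_sq_le_pow {x : ℝ} (hx : 0 ≤ x) (n : ℕ) :
    1 + n * x + n.choose 2 * x ^ 2 ≤ (1 + x) ^ n := by
  induction n with
  | zero => simp
  | succ n ih =>
    rw [pow_succ (1 + x), Nat.choose_succ_succ, Nat.choose_one_right]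
    push_cast
    nlinarith [mul_le_mul_of_nonneg_right ih (by linarith : 0 ≤ 1 + x),
      mul_nonneg (Nat.cast_nonneg (n.choose 2) : (0 : ℝ) ≤ n.choose 2) (pow_nonneg hx 3)]

lemma one_add_half_sq_le_one_add_div_pow {a : ℝ} (ha : 0 ≤ a) {n : ℕ} (hn : 2 ≤ n) :
    (1 + a / 2) ^ 2 ≤ (1 + a / n) ^ n := by
  have hn' : (2 : ℝ) ≤ n := by exact_mod_cast hn
  have h := one_add_mul_add_choose_two_mul_sq_le_pow (div_nonneg ha (Nat.cast_nonneg n)) n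
  rw [Nat.cast_choose_two] at h
  have hlin : (n : ℝ) * (a / n) = a := by field_simp
  have hquad : (n : ℝ) * (n - 1) / 2 * (a / n) ^ 2 = (n - 1) / (2 * n) * a ^ 2 := by
    field_simp
  have hcoef : (1 : ℝ) / 4 ≤ (n - 1) / (2 * n) := by
    rw [div_le_div_iff₀ (by norm_num) (by positivity)]
    linarith
  nlinarith [mul_le_mul_of_nonneg_right hcoef (sq_nonneg a)]

lemma tendsto_one_add_div_pow_succ_exp (a : ℝ) :
    Tendsto (fun n : ℕ => (1 + a / n) ^ (n + 1)) atTop (𝓝 (exp a)) := by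
  have h : Tendsto (fun n : ℕ => 1 + a / n) atTop (𝓝 1) := by
    simpa using (tendsto_const_div_atTop_nhds_zero_nat a).const_add 1
  simpa [pow_succ] using (tendsto_one_add_div_pow_exp a).mul h

lemma tendsto_mul_arctan_div_atTop (t : ℝ) :
    Tendsto (fun x : ℝ => x * arctan (t / x)) atTop (𝓝 t) := by
  have hderiv : HasDerivAt (fun u => arctan (t * u)) t 0 := by
    simpa using ((hasDerivAt_id (0 : ℝ)).const_mul t).arctan
  have hslope := (hasDerivAt_iff_tendsto_slope_zero.1 hderiv).comp
    (tendsto_inv_atTop_nhdsGT_zero.mono_right (nhdsGT_le_nhdsNE 0))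
  refine hslope.congr' ?_
  filter_upwards [eventually_gt_atTop 0] with x hx
  simp [div_eq_mul_inv]

lemma integral_Ioi_sq_mul_exp_neg_sq :
    ∫ t in Ioi (0 : ℝ), t ^ 2 * exp (-t ^ 2) = √π / 4 := by
  have h := integral_rpow_mul_exp_neg_rpow (p := 2) (q := 2) (by norm_num) (by norm_num)
  norm_num [Real.rpow_two] at h
  rw [h, show (3 : ℝ) / 2 = 1 / 2 + 1 by norm_num, Gamma_add_one (by norm_num),
    Gamma_one_half_eq]
  ring

lemma integral_Ioi_comp_div (g : ℝ → ℝ) {c : ℝ} (hc : 0 < c) :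
    ∫ t in Ioi (0 : ℝ), g (t / c) = c * ∫ t in Ioi (0 : ℝ), g t := by
  simpa [div_eq_inv_mul] using integral_comp_mul_left_Ioi g 0 (inv_pos.2 hc)

noncomputable def sphericalIntegrand (N : ℕ) (r : ℝ) : ℝ :=
  r * (2 * arctan r) / (1 + r ^ 2) ^ (N + 1)

lemma continuous_sphericalIntegrand (N : ℕ) : Continuous (sphericalIntegrand N) :=
  Continuous.div (by fun_prop) (by fun_prop) fun r => by positivity

lemma natCast_mul_sphericalIntegrand_div_sqrt {N : ℕ} (hN : N ≠ 0) (t : ℝ) :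
    N * sphericalIntegrand N (t / √N) =
      2 * t * (√N * arctan (t / √N)) / (1 + t ^ 2 / N) ^ (N + 1) := by
  have hs : √(N : ℝ) ≠ 0 := by positivity
  have hsq : √(N : ℝ) ^ 2 = N := sq_sqrt (Nat.cast_nonneg N)
  rw [sphericalIntegrand, div_pow, hsq]
  field_simp
  rw [hsq]
  ring

lemma tendsto_natCast_mul_sphericalIntegrand_div_sqrt (t : ℝ) :
    Tendsto (fun N : ℕ => N * sphericalIntegrand N (t / √N)) atTop
      (𝓝 (2 * t ^ 2 * exp (-t ^ 2))) := by
  have hsqrt : Tendsto (fun N : ℕ => √(N : ℝ)) atTop atTop :=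
    tendsto_sqrt_atTop.comp tendsto_natCast_atTop_atTop
  have hnum := ((tendsto_mul_arctan_div_atTop t).comp hsqrt).const_mul (2 * t)
  have hlim := hnum.div (tendsto_one_add_div_pow_succ_exp (t ^ 2)) (exp_pos _).ne'
  rw [show 2 * t * t / exp (t ^ 2) = 2 * t ^ 2 * exp (-t ^ 2) by
    rw [exp_neg]; field_simp] at hlim
  refine hlim.congr' ?_
  filter_upwards [eventually_ne_atTop 0] with N hN
  exact (natCast_mul_sphericalIntegrand_div_sqrt hN t).symm

lemma norm_natCast_mul_sphericalIntegrand_div_sqrt_le {N : ℕ} (hN : 2 ≤ N) {t : ℝ}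
    (ht : 0 ≤ t) : ‖N * sphericalIntegrand N (t / √N)‖ ≤ 8 / (1 + t ^ 2) := by
  have hNpos : (0 : ℝ) < N := by exact_mod_cast (by omega : 0 < N)
  have hs : 0 < √(N : ℝ) := sqrt_pos.2 hNpos
  have harctan : √N * arctan (t / √N) ≤ t := by
    calc √N * arctan (t / √N) ≤ √N * (t / √N) := by
          gcongr; exact arctan_le_self_s9 (by positivity)
      _ = t := by field_simp
  have hden : (1 + t ^ 2 / 2) ^ 2 ≤ (1 + t ^ 2 / N) ^ (N + 1) :=
    (one_add_half_sq_le_one_add_div_pow (sq_nonneg t) hN).trans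
      (pow_le_pow_right₀ (le_add_of_nonneg_right (by positivity)) N.le_succ)
  rw [natCast_mul_sphericalIntegrand_div_sqrt (by omega), Real.norm_of_nonneg (by positivity)]
  calc 2 * t * (√N * arctan (t / √N)) / (1 + t ^ 2 / N) ^ (N + 1)
      ≤ 2 * t * t / (1 + t ^ 2 / 2) ^ 2 := by gcongr
    _ ≤ 8 / (1 + t ^ 2) := by
      rw [div_le_div_iff₀ (by positivity) (by positivity)]
      nlinarith [sq_nonneg t, pow_nonneg ht 4]

lemma tendsto_integral_natCast_mul_sphericalIntegrand_div_sqrt :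
    Tendsto (fun N : ℕ => ∫ t in Ioi (0 : ℝ), N * sphericalIntegrand N (t / √N)) atTop
      (𝓝 (√π / 2)) := by
  have hgauss : ∫ t in Ioi (0 : ℝ), 2 * t ^ 2 * exp (-t ^ 2) = √π / 2 := by
    simp_rw [mul_assoc, integral_const_mul, integral_Ioi_sq_mul_exp_neg_sq]
    ring
  rw [← hgauss]
  refine tendsto_integral_filter_of_dominated_convergence (fun t => 8 / (1 + t ^ 2))
    (Eventually.of_forall fun N => ?_) ?_ ?_ ?_
  · exact (Continuous.aestronglyMeasurable (by
      have := continuous_sphericalIntegrand N; fun_prop))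
  · filter_upwards [eventually_ge_atTop 2] with N hN
    filter_upwards [ae_restrict_mem measurableSet_Ioi] with t ht
    exact norm_natCast_mul_sphericalIntegrand_div_sqrt_le hN (le_of_lt ht)
  · simpa [div_eq_mul_inv] using (integrable_inv_one_add_sq.const_mul 8).restrict
  · exact Eventually.of_forall tendsto_natCast_mul_sphericalIntegrand_div_sqrt

/-- For the spherical ensemble on `S²`,
`C_N^1 = 2N² ∫₀^∞ r (2 arctan r)(1+r²)^{−(N+1)} dr` satisfies
`lim_{N→∞} C_N^1/√N = √π`. -/
theorem spherical_ensemble_CN1 :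
    Tendsto (fun N : ℕ =>
        (2 * (N : ℝ) ^ 2 *
          ∫ r in Set.Ioi (0 : ℝ), r * (2 * Real.arctan r) / (1 + r ^ 2) ^ (N + 1)) /
          Real.sqrt N)
      atTop (nhds (Real.sqrt π)) := by
  have hlim := tendsto_integral_natCast_mul_sphericalIntegrand_div_sqrt.const_mul 2
  rw [mul_div_cancel₀ _ two_ne_zero] at hlim
  refine hlim.congr' ?_
  filter_upwards [eventually_ne_atTop 0] with N hN
  have hs : √(N : ℝ) ≠ 0 := by positivity
  rw [integral_const_mul, integral_Ioi_comp_div _ (by positivity)]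
  simp only [sphericalIntegrand]
  field_simp
  rw [sq_sqrt (Nat.cast_nonneg N)]
end
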